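/- Equality of feasible sets for the channel-distance SDP: Let X = ℂⁿ and Y = ℂᵐ. Define Q = {R ∈ Pos(Y⊗X) : R ≤ 1_Y ⊗ ρ for some density operator ρ ∈ D(X)} and R = {(1_Y ⊗ B*) P (1_Y ⊗ B) : B ∈ L(X), P ∈ Pos(Y⊗X), ‖B‖₂ = 1, P ≤ 1_{Y⊗X}}, where ‖B‖₂ = √Tr(B*B) is the Frobenius norm. Then Q = R. -/

import Mathlib

open Matrix
open scoped Kronecker ComplexOrder

noncomputable section

/-- The trace norm `‖A‖₁ = Tr √(A* A)`. -/
def traceNorm {m n : Type*} [Fintype m] [Fintype n] [DecidableEq n]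
    (A : Matrix m n ℂ) : ℝ :=
  (((Matrix.posSemidef_conjTranspose_mul_self A).1.eigenvectorUnitary : Matrix n n ℂ) *
      diagonal (((↑) : ℝ → ℂ) ∘ Real.sqrt ∘ (Matrix.posSemidef_conjTranspose_mul_self A).1.eigenvalues) *
      (star (Matrix.posSemidef_conjTranspose_mul_self A).1.eigenvectorUnitary :
        Matrix n n ℂ)).trace.re

/-- The spectral norm (operator norm w.r.t. Euclidean norms). -/
def specNorm {m n : Type*} [Fintype m] [Fintype n] [DecidableEq n]
    (A : Matrix m n ℂ) : ℝ :=
  ‖LinearMap.toContinuousLinearMap (Matrix.toEuclideanLin A)‖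

/-- The Frobenius norm `‖A‖₂ = √Tr(A*A)`. -/
def frobeniusNorm {m n : Type*} [Fintype m] [Fintype n] (A : Matrix m n ℂ) : ℝ :=
  Real.sqrt ((Aᴴ * A).trace.re)

/-- Partial trace over the first tensor factor. -/
def ptraceFst {y z : Type*} [Fintype y] (M : Matrix (y × z) (y × z) ℂ) : Matrix z z ℂ :=
  Matrix.of fun a b => ∑ i, M (i, a) (i, b)

/-- Partial trace over the second tensor factor. -/
def ptraceSnd {y z : Type*} [Fintype z] (M : Matrix (y × z) (y × z) ℂ) : Matrix y y ℂ :=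
  Matrix.of fun i j => ∑ a, M (i, a) (j, a)

/-- The super-operator `Φ ⊗ 1_{L(W)}`, for `Φ : L(X) → L(Y)` and `W` indexed by `k`. -/
def tensorId {n m : Type*} [Fintype n] [Fintype m] (k : Type*) [Fintype k]
    (Φ : Matrix n n ℂ →ₗ[ℂ] Matrix m m ℂ) :
    Matrix (n × k) (n × k) ℂ →ₗ[ℂ] Matrix (m × k) (m × k) ℂ where
  toFun M := Matrix.of fun p q => Φ (Matrix.of fun i j => M (i, p.2) (j, q.2)) p.1 q.1
  map_add' M N := by
    ext p q
    show Φ (Matrix.of fun i j => (M + N) (i, p.2) (j, q.2)) p.1 q.1 =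
      Φ (Matrix.of fun i j => M (i, p.2) (j, q.2)) p.1 q.1 +
        Φ (Matrix.of fun i j => N (i, p.2) (j, q.2)) p.1 q.1
    have h : (Matrix.of fun i j => (M + N) (i, p.2) (j, q.2)) =
        (Matrix.of fun i j => M (i, p.2) (j, q.2)) +
          (Matrix.of fun i j => N (i, p.2) (j, q.2)) := rfl
    rw [h, map_add]; rfl
  map_smul' c M := by
    ext p q
    show Φ (Matrix.of fun i j => (c • M) (i, p.2) (j, q.2)) p.1 q.1 =
      (c • Φ (Matrix.of fun i j => M (i, p.2) (j, q.2))) p.1 q.1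
    have h : (Matrix.of fun i j => (c • M) (i, p.2) (j, q.2)) =
        c • (Matrix.of fun i j => M (i, p.2) (j, q.2)) := rfl
    rw [h, _root_.map_smul]

/-- The trace norm induced on super-operators. -/
def inducedTraceNorm {a b : Type*} [Fintype a] [DecidableEq a] [Fintype b] [DecidableEq b]
    (Φ : Matrix a a ℂ →ₗ[ℂ] Matrix b b ℂ) : ℝ :=
  sSup {x : ℝ | ∃ X : Matrix a a ℂ, traceNorm X ≤ 1 ∧ x = traceNorm (Φ X)}

/-- The completely bounded trace norm (diamond norm):
`sup over k ≥ 1 of ‖Φ ⊗ 1_{L(ℂᵏ)}‖₁`. -/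
def diamondNorm {n m : Type*} [Fintype n] [DecidableEq n] [Fintype m] [DecidableEq m]
    (Φ : Matrix n n ℂ →ₗ[ℂ] Matrix m m ℂ) : ℝ :=
  ⨆ k : ℕ, inducedTraceNorm (tensorId (Fin (k + 1)) Φ)


/-- Choi–Jamiołkowski representation `J(Φ) = Σ_{i,j} Φ(E_{i,j}) ⊗ E_{i,j}`. -/
def choi {n m : Type*} [Fintype n] [DecidableEq n] [Fintype m]
    (Φ : Matrix n n ℂ →ₗ[ℂ] Matrix m m ℂ) : Matrix (m × n) (m × n) ℂ :=
  ∑ i : n, ∑ j : n, (Φ (Matrix.single i j 1)) ⊗ₖ (Matrix.single i j 1)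

/-- A quantum channel: a completely positive and trace-preserving super-operator. -/
def IsQuantumChannel {n m : Type*} [Fintype n] [Fintype m]
    (Φ : Matrix n n ℂ →ₗ[ℂ] Matrix m m ℂ) : Prop :=
  (∀ (k : ℕ) (P : Matrix (n × Fin k) (n × Fin k) ℂ), P.PosSemidef →
      (tensorId (Fin k) Φ P).PosSemidef) ∧
    ∀ X : Matrix n n ℂ, (Φ X).trace = X.trace

open Classical in
/-- Square root of a positive semidefinite matrix (junk value `0` otherwise). -/
def matSqrt {r : Type*} [Fintype r] [DecidableEq r] (P : Matrix r r ℂ) : Matrix r r ℂ :=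
  if h : P.PosSemidef then
    (h.1.eigenvectorUnitary : Matrix r r ℂ) * diagonal (((↑) : ℝ → ℂ) ∘ Real.sqrt ∘ h.1.eigenvalues) *
      (star h.1.eigenvectorUnitary : Matrix r r ℂ) else 0

/-- The fidelity `F(P,Q) = ‖√P √Q‖₁`. -/
def fidelity {r : Type*} [Fintype r] [DecidableEq r] (P Q : Matrix r r ℂ) : ℝ :=
  traceNorm (matSqrt P * matSqrt Q)

/-!
If `0 ≤ R ≤ 1 ⊗ ρ`, put `A = 1 ⊗ √ρ`, so that `R ≤ A*A`. With the pseudo-inverse `A⁺` of `A`,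
`P = A⁺ R A⁺` satisfies `0 ≤ P ≤ A⁺ A² A⁺ ≤ 1`, and `A P A = R` because `R` vanishes on `ker A`
(there `x* R x ≤ ‖A x‖² = 0`); this is a finite-dimensional Douglas lemma. Moreover
`‖√ρ‖₂² = Tr ρ = 1`. Conversely `(1 ⊗ B)* P (1 ⊗ B)` lies between `0` and `1 ⊗ B* B`, and
`‖B‖₂ = 1` makes `B* B` a density operator.
-/

open scoped MatrixOrder

namespace Matrix

section Loewner

variable {𝕜 n : Type*} [RCLike 𝕜] [Fintype n] [DecidableEq n]

theorem mul_eq_zero_of_le_conjTranspose_mul_self {R M N : Matrix n n 𝕜} (hR : 0 ≤ R)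
    (hRM : R ≤ Mᴴ * M) (hMN : M * N = 0) : R * N = 0 := by
  have hNRN : Nᴴ * R * N = 0 := by
    refine le_antisymm ?_ (star_left_conjugate_nonneg hR N)
    calc Nᴴ * R * N ≤ Nᴴ * (Mᴴ * M) * N := star_left_conjugate_le_conjugate hRM N
      _ = (M * N)ᴴ * (M * N) := by simp only [conjTranspose_mul, Matrix.mul_assoc]
      _ = 0 := by rw [hMN, Matrix.mul_zero]
  have hsqrt : (CFC.sqrt R)ᴴ = CFC.sqrt R := (CFC.sqrt_nonneg R).isSelfAdjoint
  have hSN : CFC.sqrt R * N = 0 := by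
    rw [← conjTranspose_mul_self_eq_zero, conjTranspose_mul, hsqrt, Matrix.mul_assoc,
      ← Matrix.mul_assoc (CFC.sqrt R), CFC.sqrt_mul_sqrt_self R hR, ← Matrix.mul_assoc, hNRN]
  rw [← CFC.sqrt_mul_sqrt_self R hR, Matrix.mul_assoc, hSN, Matrix.mul_zero]

theorem IsHermitian.exists_eq_mul_mul_of_le_conjTranspose_mul_self {A R : Matrix n n 𝕜}
    (hA : A.IsHermitian) (hR : 0 ≤ R) (hRA : R ≤ Aᴴ * A) :
    ∃ P, 0 ≤ P ∧ P ≤ 1 ∧ R = A * P * A := by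
  have hmul (f g : ℝ → ℝ) : cfc f A * cfc g A = cfc (fun x ↦ f x * g x) A :=
    (cfc_mul f g A (A.finite_real_spectrum.continuousOn f)
      (A.finite_real_spectrum.continuousOn g)).symm
  have hid : cfc (fun x : ℝ ↦ x) A = A := cfc_id' ℝ A hA.isSelfAdjoint
  -- the Moore–Penrose pseudo-inverse of `A`; the junk value `(0 : ℝ)⁻¹ = 0` is what makes it one
  set A' := cfc (fun x : ℝ ↦ x⁻¹) A
  have hA' : A'.IsHermitian := cfc_predicate _ A
  have hAA'A : A * A' * A = A := by
    rw [← hid, hmul, hmul]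
    simp only [mul_inv_mul_cancel]
  have hA'AAA' : A' * (Aᴴ * A) * A' ≤ 1 := by
    rw [hA.eq, ← hid, hmul, hmul, hmul]
    refine cfc_le_one _ A fun x _ ↦ ?_
    rcases eq_or_ne x 0 with rfl | hx
    · simp
    · field_simp; rfl
  have hRA'A : R * (A' * A) = R := by
    have h := mul_eq_zero_of_le_conjTranspose_mul_self (N := 1 - A' * A) hR hRA
      (by rw [Matrix.mul_sub, ← Matrix.mul_assoc, hAA'A, Matrix.mul_one, sub_self])
    rwa [Matrix.mul_sub, Matrix.mul_one, sub_eq_zero, eq_comm] at h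
  have hAA'R : A * A' * R = R := by
    simpa only [conjTranspose_mul, hA.eq, hA'.eq, (nonneg_iff_posSemidef.mp hR).isHermitian.eq,
      Matrix.mul_assoc] using congrArg (·ᴴ) hRA'A
  refine ⟨A' * R * A', hA'.isSelfAdjoint.conjugate_nonneg hR,
    (hA'.isSelfAdjoint.conjugate_le_conjugate hRA).trans hA'AAA', ?_⟩
  calc R = A * A' * R * (A' * A) := by rw [hAA'R, hRA'A]
    _ = A * (A' * R * A') * A := by simp only [Matrix.mul_assoc]

end Loewner

section Kronecker

variable {R m n : Type*} [CommRing R] [StarRing R] [DecidableEq m]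

theorem conjTranspose_one_kronecker (B : Matrix n n R) :
    ((1 : Matrix m m R) ⊗ₖ B)ᴴ = 1 ⊗ₖ Bᴴ := by
  rw [conjTranspose_kronecker, conjTranspose_one]

theorem conjTranspose_one_kronecker_mul_self [Fintype m] [Fintype n] (B : Matrix n n R) :
    ((1 : Matrix m m R) ⊗ₖ B)ᴴ * (1 ⊗ₖ B) = 1 ⊗ₖ (Bᴴ * B) := by
  rw [conjTranspose_one_kronecker, ← mul_kronecker_mul, Matrix.one_mul]

end Kronecker

end Matrix

theorem frobeniusNorm_eq_one_iff {m n : Type*} [Fintype m] [Fintype n] (B : Matrix m n ℂ) :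
    frobeniusNorm B = 1 ↔ (Bᴴ * B).trace = 1 := by
  have him := (Complex.nonneg_iff.mp (posSemidef_conjTranspose_mul_self B).trace_nonneg).2
  rw [frobeniusNorm, Real.sqrt_eq_one, Complex.ext_iff, ← him]
  simp

/-- Equality of the feasible sets for the channel-distance SDP. -/
theorem channel_sdp_feasible_sets_eq {n m : ℕ} :
    {R : Matrix (Fin m × Fin n) (Fin m × Fin n) ℂ | R.PosSemidef ∧
        ∃ ρ : Matrix (Fin n) (Fin n) ℂ, ρ.PosSemidef ∧ ρ.trace = 1 ∧
          (((1 : Matrix (Fin m) (Fin m) ℂ) ⊗ₖ ρ) - R).PosSemidef} =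
    {W : Matrix (Fin m × Fin n) (Fin m × Fin n) ℂ |
        ∃ (B : Matrix (Fin n) (Fin n) ℂ) (P : Matrix (Fin m × Fin n) (Fin m × Fin n) ℂ),
          frobeniusNorm B = 1 ∧ P.PosSemidef ∧
          ((1 : Matrix (Fin m × Fin n) (Fin m × Fin n) ℂ) - P).PosSemidef ∧
          W = ((1 : Matrix (Fin m) (Fin m) ℂ) ⊗ₖ Bᴴ) * P *
            ((1 : Matrix (Fin m) (Fin m) ℂ) ⊗ₖ B)} := by
  ext R
  simp only [Set.mem_ofPred_eq, ← nonneg_iff_posSemidef, sub_nonneg]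
  constructor
  · rintro ⟨hR, ρ, hρ, hτ, hRρ⟩
    have hB : (CFC.sqrt ρ)ᴴ = CFC.sqrt ρ := (CFC.sqrt_nonneg ρ).isSelfAdjoint
    have hBB : (CFC.sqrt ρ)ᴴ * CFC.sqrt ρ = ρ := by rw [hB, CFC.sqrt_mul_sqrt_self ρ hρ]
    have hA : ((1 : Matrix (Fin m) (Fin m) ℂ) ⊗ₖ CFC.sqrt ρ).IsHermitian := by
      rw [IsHermitian, conjTranspose_one_kronecker, hB]
    obtain ⟨P, hP, hP1, rfl⟩ := hA.exists_eq_mul_mul_of_le_conjTranspose_mul_self hR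
      (by rwa [conjTranspose_one_kronecker_mul_self, hBB])
    refine ⟨CFC.sqrt ρ, P, (frobeniusNorm_eq_one_iff _).mpr ?_, hP, hP1, by rw [hB]⟩
    rwa [hBB]
  · rintro ⟨B, P, hB, hP, hP1, rfl⟩
    set A : Matrix (Fin m × Fin n) (Fin m × Fin n) ℂ := 1 ⊗ₖ B
    refine ⟨?_, Bᴴ * B, star_mul_self_nonneg B, (frobeniusNorm_eq_one_iff B).mp hB, ?_⟩
    · rw [← conjTranspose_one_kronecker]
      exact star_left_conjugate_nonneg hP A
    · calc (1 ⊗ₖ Bᴴ) * P * A = Aᴴ * P * A := by rw [conjTranspose_one_kronecker]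
        _ ≤ Aᴴ * 1 * A := star_left_conjugate_le_conjugate hP1 A
        _ = 1 ⊗ₖ (Bᴴ * B) := by rw [Matrix.mul_one, conjTranspose_one_kronecker_mul_self]
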